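/- Let A and A' be affine point sets in general position on S² with |A| = |A'|, and let p ∈ A be an extreme point of A. For any p' ∈ A' there is at most one orientation preserving bijection f : A → A' with f(p) = p'; if such f exists, then p' is extreme in A'. -/

import Mathlib

open scoped RealInnerProductSpace

noncomputable section

abbrev E3 := EuclideanSpace ℝ (Fin 3)

/-- Determinant of the 3×3 matrix whose rows are `p`, `q`, `r`. -/
def det3 (p q r : E3) : ℝ := Matrix.det (Matrix.of ![fun i => p i, fun i => q i, fun i => r i])

/-- The orientation `sgn(p,q,r)` of a triple of points: the sign of `det3 p q r`. -/
def sgn3 (p q r : E3) : ℝ := Real.sign (det3 p q r)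

/-- An affine set: a finite subset of the unit sphere contained in an open hemisphere. -/
def IsAffineSet (A : Set E3) : Prop :=
  A.Finite ∧ A ⊆ Metric.sphere (0 : E3) 1 ∧ ∃ v : E3, ∀ p ∈ A, 0 < ⟪v, p⟫

/-- General position for an affine set: no three of its points are coplanar with the origin. -/
def GenPos (A : Set E3) : Prop :=
  ∀ p ∈ A, ∀ q ∈ A, ∀ r ∈ A, p ≠ q → p ≠ r → q ≠ r → det3 p q r ≠ 0

/-- `p` is extreme in `A`: some great circle strictly separates `p` from `A \ {p}`. -/
def IsExtremePt (p : E3) (A : Set E3) : Prop :=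
  ∃ v : E3, 0 < ⟪v, p⟫ ∧ ∀ q ∈ A, q ≠ p → ⟪v, q⟫ < 0

/-- `f` preserves orientations on `S`. -/
def OrientationPreservingOn (f : E3 → E3) (S : Set E3) : Prop :=
  ∀ p ∈ S, ∀ q ∈ S, ∀ r ∈ S, sgn3 (f p) (f q) (f r) = sgn3 p q r

/-!
Since `A` lies in an open hemisphere and a great circle separates the extreme point `p` from the
rest of `A`, some great circle through `p` has all of `A \ {p}` strictly on one side. Hence
`det3 p x y > 0` is a strict total order on `A \ {p}`, the angular order around `p`; transitivity
is Cramer's rule. An orientation preserving bijection `f` with `f p = p'` is an isomorphism from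
the angular order around `p` onto the one around `p'`. Isomorphisms between finite well orders
are unique, which gives uniqueness of `f`. The transported order around `p'` has a first and a
last element, and the great circles through `p'` and these two points bound a wedge containing
`A' \ {p'}`; a small push towards `p'` turns the resulting supporting great circle into one
separating `p'` from `A' \ {p'}`.
-/

open Matrix Filter Topology

lemma det3_eq (p q r : E3) :
    det3 p q r = p 0 * (q 1 * r 2 - q 2 * r 1) - p 1 * (q 0 * r 2 - q 2 * r 0)
      + p 2 * (q 0 * r 1 - q 1 * r 0) := by
  simp only [det3, det_fin_three, of_apply, cons_val', cons_val_fin_one, cons_val_zero,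
    cons_val_one, cons_val]
  ring

lemma det3_swap (p q r : E3) : det3 p r q = -det3 p q r := by
  rw [det3_eq, det3_eq]; ring

lemma det3_self_right (p q : E3) : det3 p q q = 0 := by
  rw [det3_eq]; ring

lemma det3_self_left (p q : E3) : det3 p q p = 0 := by
  rw [det3_eq]; ring

lemma det3_self_mid (p q : E3) : det3 p p q = 0 := by
  rw [det3_eq]; ring

def cross3 (a b : E3) : E3 := WithLp.toLp 2 (WithLp.ofLp a ⨯₃ WithLp.ofLp b)

lemma inner_cross3 (a b x : E3) : ⟪cross3 a b, x⟫ = det3 a b x := by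
  simp only [cross3, EuclideanSpace.inner_eq_star_dotProduct, star_trivial]
  rw [triple_product_permutation, triple_product_eq_det]
  rfl

lemma inner_cross3_sub_cross3 (p a b x : E3) :
    ⟪cross3 p b - cross3 p a, x⟫ = -(det3 p a x + det3 p x b) := by
  rw [inner_sub_left, inner_cross3, inner_cross3, det3_swap p x b]
  ring

lemma det3_mul_inner (w p q r s : E3) :
    det3 p q s * ⟪w, r⟫ =
      det3 r q s * ⟪w, p⟫ + det3 p r s * ⟪w, q⟫ + det3 p q r * ⟪w, s⟫ := by
  simp only [EuclideanSpace.inner_eq_star_dotProduct, star_trivial, dotProduct, Fin.sum_univ_three,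
    det3_eq]
  ring

lemma det3_pos_trans {w p q r s : E3} (hwp : ⟪w, p⟫ = 0) (hwq : ⟪w, q⟫ < 0) (hwr : ⟪w, r⟫ < 0)
    (hws : ⟪w, s⟫ < 0) (hqr : 0 < det3 p q r) (hrs : 0 < det3 p r s) : 0 < det3 p q s := by
  have hneg : det3 p q s * ⟪w, r⟫ < 0 := by
    rw [det3_mul_inner w p q r s, hwp, mul_zero, zero_add]
    nlinarith [mul_neg_of_pos_of_neg hrs hwq, mul_neg_of_pos_of_neg hqr hws]
  exact pos_of_mul_neg_left hneg hwr.le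

lemma Real.pos_iff_of_sign_eq {a b : ℝ} (h : Real.sign a = Real.sign b) : 0 < a ↔ 0 < b := by
  have key : ∀ x : ℝ, 0 < x ↔ Real.sign x = 1 := fun x => by
    rcases lt_trichotomy x 0 with hx | rfl | hx
    · norm_num [Real.sign_of_neg hx, hx.not_gt]
    · simp [Real.sign_zero]
    · simp [Real.sign_of_pos hx, hx]
  rw [key, key, h]

lemma exists_inner_pos_of_inner_neg {F : Type*} [NormedAddCommGroup F] [InnerProductSpace ℝ F]
    {S : Set F} (hS : S.Finite) {p c : F} (hp : p ≠ 0) (hcp : 0 ≤ ⟪c, p⟫)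
    (hc : ∀ q ∈ S, ⟪c, q⟫ < 0) : ∃ w, 0 < ⟪w, p⟫ ∧ ∀ q ∈ S, ⟪w, q⟫ < 0 := by
  have hsmall : ∀ᶠ ε in 𝓝[>] (0 : ℝ), 0 < ε ∧ ∀ q ∈ S, ⟪c + ε • p, q⟫ < 0 := by
    refine eventually_mem_nhdsWithin.and (hS.eventually_all.2 fun q hq => ?_)
    have hcont : Continuous fun ε : ℝ => ⟪c + ε • p, q⟫ := by fun_prop
    exact (hcont.tendsto' 0 _ (by simp)).mono_left nhdsWithin_le_nhds |>.eventually
      (gt_mem_nhds (hc q hq))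
  obtain ⟨ε, hε, hS⟩ := hsmall.exists
  refine ⟨c + ε • p, ?_, hS⟩
  rw [inner_add_left, real_inner_smul_left]
  have := real_inner_self_pos.2 hp
  positivity

-- Tilt the separating great circle of `v`, within the pencil spanned by `u` and `v`, until it
-- passes through `p`.
lemma IsExtremePt.exists_supporting {A : Set E3} {p u : E3} (hu : ∀ q ∈ A, 0 < ⟪u, q⟫)
    (hp : p ∈ A) (hpe : IsExtremePt p A) :
    ∃ w : E3, ⟪w, p⟫ = 0 ∧ ∀ q ∈ A, q ≠ p → ⟪w, q⟫ < 0 := by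
  obtain ⟨v, hvp, hv⟩ := hpe
  refine ⟨⟪u, p⟫ • v - ⟪v, p⟫ • u, ?_, fun q hq hqp => ?_⟩
  · rw [inner_sub_left, real_inner_smul_left, real_inner_smul_left]; ring
  · rw [inner_sub_left, real_inner_smul_left, real_inner_smul_left]
    nlinarith [mul_neg_of_pos_of_neg (hu p hp) (hv q hq hqp), mul_pos hvp (hu q hq)]

def ccwAround (A : Set E3) (p : E3) (x y : ↥(A \ {p})) : Prop := 0 < det3 p x y

lemma isStrictTotalOrder_ccwAround {A : Set E3} {p u : E3} (hu : ∀ q ∈ A, 0 < ⟪u, q⟫)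
    (hgp : GenPos A) (hp : p ∈ A) (hpe : IsExtremePt p A) :
    IsStrictTotalOrder _ (ccwAround A p) where
  trichotomous x y hxy hyx := by
    by_contra hne
    have := hgp p hp x x.2.1 y y.2.1 (Ne.symm x.2.2) (Ne.symm y.2.2) (Subtype.coe_ne_coe.2 hne)
    unfold ccwAround at hxy hyx
    rw [det3_swap] at hyx
    exact this (by linarith)
  irrefl x := by simp [ccwAround, det3_self_right]
  trans x y z hxy hyz := by
    obtain ⟨w, hwp, hw⟩ := hpe.exists_supporting hu hp
    exact det3_pos_trans hwp (hw x x.2.1 x.2.2) (hw y y.2.1 y.2.2) (hw z z.2.1 z.2.2) hxy hyz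

lemma isWellOrder_ccwAround {A : Set E3} {p u : E3} (hfin : A.Finite)
    (hu : ∀ q ∈ A, 0 < ⟪u, q⟫) (hgp : GenPos A) (hp : p ∈ A) (hpe : IsExtremePt p A) :
    IsWellOrder _ (ccwAround A p) := by
  have := isStrictTotalOrder_ccwAround hu hgp hp hpe
  have : Finite ↥(A \ {p}) := hfin.sdiff.to_subtype
  exact { wf := Finite.wellFounded_of_trans_of_irrefl _ }

def ccwAroundRelIso {A A' : Set E3} {f : E3 → E3} {p p' : E3} (hp : p ∈ A)
    (hf : Set.BijOn f A A') (hof : OrientationPreservingOn f A) (hfp : f p = p') :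
    ccwAround A p ≃r ccwAround A' p' where
  toEquiv := (hfp ▸ hf.sdiff_singleton hp : Set.BijOn f (A \ {p}) (A' \ {p'})).equiv f
  map_rel_iff' {x y} := by
    subst hfp
    exact Real.pos_iff_of_sign_eq (hof p hp x x.2.1 y y.2.1)

lemma eqOn_of_orientationPreservingOn {A A' : Set E3} {f g : E3 → E3} {p p' : E3}
    (hp : p ∈ A) [IsWellOrder _ (ccwAround A p)]
    (hf : Set.BijOn f A A') (hof : OrientationPreservingOn f A) (hfp : f p = p')
    (hg : Set.BijOn g A A') (hog : OrientationPreservingOn g A) (hgp : g p = p') :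
    Set.EqOn f g A := by
  intro x hx
  rcases eq_or_ne x p with rfl | hxp
  · rw [hfp, hgp]
  let F := ccwAroundRelIso hp hf hof hfp
  let G := ccwAroundRelIso hp hg hog hgp
  have := F.symm.toRelEmbedding.isWellOrder
  exact congrArg Subtype.val (InitialSeg.eq_relIso G.toInitialSeg F ⟨x, hx, hxp⟩)

lemma exists_supporting_of_isStrictTotalOrder {A : Set E3} {p : E3}
    (hA : A ⊆ Metric.sphere 0 1) (hfin : A.Finite) (hp : p ∈ A)
    [IsStrictTotalOrder _ (ccwAround A p)] :
    ∃ c : E3, 0 ≤ ⟪c, p⟫ ∧ ∀ q ∈ A \ {p}, ⟪c, q⟫ < 0 := by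
  rcases (A \ {p}).eq_empty_or_nonempty with hB | hB
  · exact ⟨0, by simp, by simp [hB]⟩
  classical
  let := linearOrderOfSTO (ccwAround A p)
  have : Finite ↥(A \ {p}) := hfin.sdiff.to_subtype
  have := hB.to_subtype
  obtain ⟨q₁, hq₁⟩ : ∃ q₁ : ↥(A \ {p}), ∀ x, q₁ ≤ x := Finite.exists_min id
  obtain ⟨q₂, hq₂⟩ : ∃ q₂ : ↥(A \ {p}), ∀ x, x ≤ q₂ := Finite.exists_max id
  rcases eq_or_ne q₁ q₂ with h | h
  · have hp1 : ‖p‖ = 1 := by simpa using hA hp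
    have hq₁1 : ‖(q₁ : E3)‖ = 1 := by simpa using hA q₁.2.1
    refine ⟨p - q₁, ?_, fun q hq => ?_⟩
    · rw [inner_sub_left, real_inner_self_eq_norm_sq, hp1]
      linarith [real_inner_le_one_of_norm_eq_one hq₁1 hp1]
    · obtain rfl : q = q₁ := congrArg Subtype.val (le_antisymm (h ▸ hq₂ ⟨q, hq⟩) (hq₁ ⟨q, hq⟩))
      rw [inner_sub_left, real_inner_self_eq_norm_sq, hq₁1]
      linarith [(inner_lt_one_iff_real_of_norm_eq_one hp1 hq₁1).2 (Ne.symm hq.2)]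
  -- `A \ {p}` lies in the wedge between the great circles through `p` and `q₁`, `q₂`.
  refine ⟨cross3 p q₂ - cross3 p q₁, ?_, fun q hq => ?_⟩
  · rw [inner_cross3_sub_cross3, det3_self_left, det3_self_mid, add_zero, neg_zero]
  have hdet : ∀ x y : ↥(A \ {p}), x ≤ y → 0 ≤ det3 p x y := fun x y hxy => by
    rcases hxy.eq_or_lt with rfl | hlt
    · rw [det3_self_right]
    · exact le_of_lt (show 0 < det3 p x y from hlt)
  let x : ↥(A \ {p}) := ⟨q, hq⟩
  have hstrict : q₁ < x ∨ x < q₂ := by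
    rcases (hq₁ x).lt_or_eq with hlt | heq
    · exact Or.inl hlt
    · exact Or.inr (heq ▸ (hq₂ q₁).lt_of_ne h)
  rw [inner_cross3_sub_cross3]
  rcases hstrict with hlt | hlt
  · linarith [show 0 < det3 p q₁ x from hlt, hdet x q₂ (hq₂ x)]
  · linarith [show 0 < det3 p x q₂ from hlt, hdet q₁ x (hq₁ x)]

lemma isExtremePt_of_isStrictTotalOrder {A : Set E3} {p : E3} (hA : A ⊆ Metric.sphere 0 1)
    (hfin : A.Finite) (hp : p ∈ A) [IsStrictTotalOrder _ (ccwAround A p)] :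
    IsExtremePt p A := by
  obtain ⟨c, hcp, hc⟩ := exists_supporting_of_isStrictTotalOrder hA hfin hp
  have hp0 : p ≠ 0 := ne_zero_of_mem_unit_sphere ⟨p, hA hp⟩
  obtain ⟨w, hwp, hw⟩ := exists_inner_pos_of_inner_neg hfin.sdiff hp0 hcp hc
  exact ⟨w, hwp, fun q hq hqp => hw q ⟨hq, hqp⟩⟩

theorem stmt6_general (A A' : Set E3) (hA : IsAffineSet A) (hA' : IsAffineSet A')
    (hgp : GenPos A)
    (p : E3) (hp : p ∈ A) (hpe : IsExtremePt p A) (p' : E3) (hp' : p' ∈ A') :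
    (∀ f g : E3 → E3, Set.BijOn f A A' → OrientationPreservingOn f A →
      Set.BijOn g A A' → OrientationPreservingOn g A →
      f p = p' → g p = p' → Set.EqOn f g A) ∧
    (∀ f : E3 → E3, Set.BijOn f A A' → OrientationPreservingOn f A →
      f p = p' → IsExtremePt p' A') := by
  obtain ⟨hAfin, -, u, hu⟩ := hA
  obtain ⟨hA'fin, hA'sph, -⟩ := hA'
  have := isWellOrder_ccwAround hAfin hu hgp hp hpe
  refine ⟨fun f g hf hof hg hog hfp hgp' =>
    eqOn_of_orientationPreservingOn hp hf hof hfp hg hog hgp', fun f hf hof hfp => ?_⟩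
  have := (ccwAroundRelIso hp hf hof hfp).symm.toRelEmbedding.isWellOrder
  exact isExtremePt_of_isStrictTotalOrder hA'sph hA'fin hp'

/-- For affine sets `A, A'` in general position of equal size, an extreme
point `p` of `A` and any `p' ∈ A'`, there is at most one orientation preserving bijection
`f : A → A'` with `f p = p'`; and if one exists then `p'` is extreme in `A'`. -/
theorem stmt6 (A A' : Set E3) (hA : IsAffineSet A) (hA' : IsAffineSet A')
    (hgp : GenPos A) (hgp' : GenPos A') (hcard : A.ncard = A'.ncard)
    (p : E3) (hp : p ∈ A) (hpe : IsExtremePt p A) (p' : E3) (hp' : p' ∈ A') :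
    (∀ f g : E3 → E3, Set.BijOn f A A' → OrientationPreservingOn f A →
      Set.BijOn g A A' → OrientationPreservingOn g A →
      f p = p' → g p = p' → Set.EqOn f g A) ∧
    (∀ f : E3 → E3, Set.BijOn f A A' → OrientationPreservingOn f A →
      f p = p' → IsExtremePt p' A') :=
  stmt6_general A A' hA hA' hgp p hp hpe p' hp'
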